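/- Let (X, μ) be a metric probability space, ν ≪ μ with density f = dν/dμ, and suppose: (i) there exist ε, δ ∈ (0,1) such that for every Borel E ⊆ X, μ(E) < δ·μ(X) implies ν(E) < ε·ν(X); (ii) the mean oscillation of log f satisfies ⨍_X |log f − ⨍_X log f dμ| dμ < η. Then 1 ≤ (⨍_X f dμ) · exp(−⨍_X log f dμ) ≤ e^{η/δ} / (1 − ε). -/

import Mathlib

/-!
Jensen's inequality for the convex function `exp` applied to `log f` gives the lower bound.
For the upper bound put `c = ∫ log f`. By Chebyshev and the oscillation bound, the set `E` where
`|log f - c| ≥ η / δ` has `μ E < δ`, hence `ν E < ε ν X`. Off `E` we have `f ≤ exp (c + η / δ)`,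
so `ν X = ν E + ν Eᶜ < ε ν X + exp (c + η / δ)`, i.e. `(1 - ε) ∫ f ≤ exp (c + η / δ)`.
-/

open MeasureTheory

section

variable {X : Type*} [MeasurableSpace X] {μ : Measure X}

theorem exp_integral_log_le_integral [IsProbabilityMeasure μ] {f : X → ℝ}
    (hfpos : ∀ᵐ x ∂μ, 0 < f x) (hfint : Integrable f μ)
    (hlogint : Integrable (fun x => Real.log (f x)) μ) :
    Real.exp (∫ x, Real.log (f x) ∂μ) ≤ ∫ x, f x ∂μ := by
  have hexp_log : (fun x => Real.exp (Real.log (f x))) =ᵐ[μ] f :=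
    hfpos.mono fun x hx => Real.exp_log hx
  calc Real.exp (∫ x, Real.log (f x) ∂μ) ≤ ∫ x, Real.exp (Real.log (f x)) ∂μ :=
        convexOn_exp.map_integral_le Real.continuous_exp.continuousOn isClosed_univ
          (ae_of_all _ fun _ => Set.mem_univ _) hlogint (hfint.congr hexp_log.symm)
    _ = ∫ x, f x ∂μ := integral_congr_ae hexp_log

theorem measureReal_div_le_lt_of_integral_lt {h : X → ℝ} (hnonneg : 0 ≤ᵐ[μ] h)
    (hint : Integrable h μ) {η δ : ℝ} (hδ : 0 < δ) (hlt : ∫ x, h x ∂μ < η) :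
    μ.real {x | η / δ ≤ h x} < δ := by
  have hη : 0 < η := (integral_nonneg_of_ae hnonneg).trans_lt hlt
  have hcheb := mul_meas_ge_le_integral_of_nonneg hnonneg hint (η / δ)
  have : η / δ * μ.real {x | η / δ ≤ h x} < η / δ * δ := by
    rw [div_mul_cancel₀ η hδ.ne']
    exact hcheb.trans_lt hlt
  exact lt_of_mul_lt_mul_left this (div_pos hη hδ).le

theorem withDensity_ofReal_le_of_ae_le {f : X → ℝ} {s : Set X} (hs : MeasurableSet s) {M : ℝ}
    (hle : ∀ᵐ x ∂μ, x ∈ s → f x ≤ M) :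
    μ.withDensity (fun x => ENNReal.ofReal (f x)) s ≤ ENNReal.ofReal M * μ s := by
  rw [withDensity_apply _ hs, ← setLIntegral_const]
  exact setLIntegral_mono_ae aemeasurable_const
    (hle.mono fun x hx hxs => ENNReal.ofReal_le_ofReal (hx hxs))

theorem withDensity_ofReal_real_univ {f : X → ℝ} (hfint : Integrable f μ) (hf : 0 ≤ᵐ[μ] f) :
    (μ.withDensity fun x => ENNReal.ofReal (f x)).real Set.univ = ∫ x, f x ∂μ := by
  rw [measureReal_def, withDensity_apply _ MeasurableSet.univ, Measure.restrict_univ,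
    ← ofReal_integral_eq_lintegral_ofReal hfint hf, ENNReal.toReal_ofReal (integral_nonneg_of_ae hf)]

theorem one_sub_mul_integral_le_of_le_on_compl [IsProbabilityMeasure μ] {f : X → ℝ}
    (hfint : Integrable f μ) (hf : 0 ≤ᵐ[μ] f) {E : Set X} (hE : MeasurableSet E) {ε M : ℝ}
    (hε : 0 ≤ ε) (hM : 0 ≤ M)
    (hsmall : μ.withDensity (fun x => ENNReal.ofReal (f x)) E <
      ENNReal.ofReal ε * μ.withDensity (fun x => ENNReal.ofReal (f x)) Set.univ)
    (hle : ∀ᵐ x ∂μ, x ∈ Eᶜ → f x ≤ M) :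
    (1 - ε) * ∫ x, f x ∂μ ≤ M := by
  set ν := μ.withDensity fun x => ENNReal.ofReal (f x)
  have : IsFiniteMeasure ν := isFiniteMeasure_withDensity_ofReal hfint.2
  have hνE : ν.real E < ε * ν.real Set.univ := by
    have := ENNReal.toReal_strict_mono (by finiteness) hsmall
    rwa [ENNReal.toReal_mul, ENNReal.toReal_ofReal hε] at this
  have hνEc : ν.real Eᶜ ≤ M := by
    have hbound : ν Eᶜ ≤ ENNReal.ofReal M :=
      (withDensity_ofReal_le_of_ae_le hE.compl hle).trans
        (mul_le_of_le_one_right' prob_le_one)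
    exact ENNReal.toReal_le_of_le_ofReal hM hbound
  rw [← withDensity_ofReal_real_univ hfint hf]
  linarith [measureReal_add_measureReal_compl (μ := ν) hE]

end

theorem stmt15_general {X : Type*} [MeasurableSpace X]
    (μ ν : Measure X) [IsProbabilityMeasure μ]
    (f : X → ℝ) (hfpos : ∀ᵐ x ∂μ, 0 < f x)
    (hdens : ν = μ.withDensity (fun x => ENNReal.ofReal (f x)))
    (hfint : Integrable f μ) (hlogint : Integrable (fun x => Real.log (f x)) μ)
    (ε δ : ℝ) (hε : ε ∈ Set.Ioo (0 : ℝ) 1) (hδ : δ ∈ Set.Ioo (0 : ℝ) 1)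
    (habs : ∀ E : Set X, MeasurableSet E → μ E < ENNReal.ofReal δ * μ Set.univ →
      ν E < ENNReal.ofReal ε * ν Set.univ)
    (η : ℝ)
    (hosc : ∫ x, |Real.log (f x) - ∫ y, Real.log (f y) ∂μ| ∂μ < η) :
    1 ≤ (∫ x, f x ∂μ) * Real.exp (-∫ x, Real.log (f x) ∂μ) ∧
      (∫ x, f x ∂μ) * Real.exp (-∫ x, Real.log (f x) ∂μ) ≤
        Real.exp (η / δ) / (1 - ε) := by
  subst hdens
  set c := ∫ x, Real.log (f x) ∂μ
  refine ⟨?_, ?_⟩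
  · rw [Real.exp_neg, ← div_eq_mul_inv, one_le_div (Real.exp_pos c)]
    exact exp_integral_log_le_integral hfpos hfint hlogint
  set S := {x | η / δ ≤ |Real.log (f x) - c|}
  have hμS : μ.real S < δ := measureReal_div_le_lt_of_integral_lt
    (ae_of_all _ fun _ => abs_nonneg _) (hlogint.sub (integrable_const c)).abs hδ.1 hosc
  -- `S` need not be measurable (`log f` is only a.e. measurable), so `habs` is applied to a
  -- measurable hull of `S`.
  have hμE : μ (toMeasurable μ S) < ENNReal.ofReal δ * μ Set.univ := by
    rw [measure_univ, mul_one, measure_toMeasurable]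
    exact (ENNReal.lt_ofReal_iff_toReal_lt (measure_ne_top μ S)).2 hμS
  have hle : ∀ᵐ x ∂μ, x ∈ (toMeasurable μ S)ᶜ → f x ≤ Real.exp (c + η / δ) := by
    filter_upwards [hfpos] with x hx hxE
    have hxS : |Real.log (f x) - c| < η / δ :=
      not_le.1 fun h => hxE (subset_toMeasurable μ S h)
    rw [← Real.exp_log hx, Real.exp_le_exp]
    linarith [(abs_lt.1 hxS).2]
  have hmass := one_sub_mul_integral_le_of_le_on_compl hfint (hfpos.mono fun _ hx => hx.le)
    (measurableSet_toMeasurable μ S) hε.1.le (Real.exp_pos _).le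
    (habs _ (measurableSet_toMeasurable μ S) hμE) hle
  rw [le_div_iff₀ (sub_pos.2 hε.2)]
  calc (∫ x, f x ∂μ) * Real.exp (-c) * (1 - ε) = (1 - ε) * (∫ x, f x ∂μ) * Real.exp (-c) := by
        ring
    _ ≤ Real.exp (c + η / δ) * Real.exp (-c) := by gcongr
    _ = Real.exp (η / δ) := by rw [← Real.exp_add]; ring_nf

/-- Quantitative absolute-continuity estimate: if small `μ`-proportion implies small
`ν`-proportion and `log f` has mean oscillation `< η`, then
`1 ≤ (⨍ f dμ) exp(−⨍ log f dμ) ≤ e^{η/δ}/(1−ε)`. -/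
theorem stmt15 {X : Type*} [MetricSpace X] [MeasurableSpace X] [BorelSpace X]
    (μ ν : Measure X) [IsProbabilityMeasure μ] [IsFiniteMeasure ν]
    (f : X → ℝ) (hfpos : ∀ᵐ x ∂μ, 0 < f x)
    (hdens : ν = μ.withDensity (fun x => ENNReal.ofReal (f x)))
    (hfint : Integrable f μ) (hlogint : Integrable (fun x => Real.log (f x)) μ)
    (ε δ : ℝ) (hε : ε ∈ Set.Ioo (0 : ℝ) 1) (hδ : δ ∈ Set.Ioo (0 : ℝ) 1)
    (habs : ∀ E : Set X, MeasurableSet E → μ E < ENNReal.ofReal δ * μ Set.univ →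
      ν E < ENNReal.ofReal ε * ν Set.univ)
    (η : ℝ)
    (hosc : ∫ x, |Real.log (f x) - ∫ y, Real.log (f y) ∂μ| ∂μ < η) :
    1 ≤ (∫ x, f x ∂μ) * Real.exp (-∫ x, Real.log (f x) ∂μ) ∧
      (∫ x, f x ∂μ) * Real.exp (-∫ x, Real.log (f x) ∂μ) ≤
        Real.exp (η / δ) / (1 - ε) :=
  stmt15_general μ ν f hfpos hdens hfint hlogint ε δ hε hδ habs η hosc
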